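/- For every ε ∈ (0,1) and c > 0 and all real x, one has 0 ≤ x⁺ − c·Φ(x/c) ≤ ε − c·ln(1 − e^{−ε/c}) + c·(ln|x|)⁺ − c·ln c, where x⁺ = max(x,0). -/
import Mathlib


open Real

/-- Φ(y) = ln((e^y − 1)/y) for y ≠ 0, Φ(0) = 0. -/
noncomputable def Phi (y : ℝ) : ℝ :=
  if y = 0 then 0 else Real.log ((Real.exp y - 1) / y)

lemma aux_pos (t : ℝ) (ht : 0 < t) : 0 < 1 - Real.exp (-t) := by
  have h : Real.exp (-t) < 1 := by
    rw [Real.exp_lt_one_iff]; linarith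
  linarith

lemma aux_le (t : ℝ) : 1 - Real.exp (-t) ≤ t := by
  nlinarith [Real.add_one_le_exp (-t)]

lemma g_nonneg (t : ℝ) (ht : 0 < t) :
    Real.log (1 - Real.exp (-t)) ≤ Real.log t :=
  Real.log_le_log (aux_pos t ht) (aux_le t)

lemma g_le_self (t : ℝ) (ht : 0 < t) :
    Real.log t - Real.log (1 - Real.exp (-t)) ≤ t := by
  have hA := aux_pos t ht
  have h1 : Real.exp t - 1 = Real.exp t * (1 - Real.exp (-t)) := by
    rw [mul_sub, mul_one, ← Real.exp_add, add_neg_cancel, Real.exp_zero]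
  have h2 : Real.log (Real.exp t - 1) = t + Real.log (1 - Real.exp (-t)) := by
    rw [h1, Real.log_mul (Real.exp_ne_zero t) (ne_of_gt hA), Real.log_exp]
  have h3 : Real.log t ≤ Real.log (Real.exp t - 1) := by
    apply Real.log_le_log ht
    nlinarith [Real.add_one_le_exp t]
  linarith

lemma Gbound (ε c t L : ℝ) (hε0 : 0 < ε) (hε1 : ε < 1) (hc : 0 < c) (ht : 0 < t)
    (hL : Real.log t ≤ max L 0 - Real.log c) :
    Real.log t - Real.log (1 - Real.exp (-t)) ≤
      ε / c - Real.log (1 - Real.exp (-(ε / c))) + max L 0 - Real.log c := by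
  set δ := ε / c with hδdef
  have hδ : 0 < δ := div_pos hε0 hc
  have hA : 0 < 1 - Real.exp (-δ) := aux_pos δ hδ
  have hAt : 0 < 1 - Real.exp (-t) := aux_pos t ht
  have hkey : Real.log (1 - Real.exp (-δ)) ≤ Real.log ε - Real.log c := by
    have h1 : Real.log (1 - Real.exp (-δ)) ≤ Real.log δ :=
      Real.log_le_log hA (aux_le δ)
    rw [hδdef, Real.log_div (ne_of_gt hε0) (ne_of_gt hc)] at h1
    exact h1
  have hεneg : Real.log ε < 0 := Real.log_neg hε0 hε1
  have hM : 0 ≤ max L 0 := le_max_right _ _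
  rcases le_total t δ with h | h
  · have hGt := g_le_self t ht
    linarith
  · have hmono : Real.log (1 - Real.exp (-δ)) ≤ Real.log (1 - Real.exp (-t)) := by
      apply Real.log_le_log hA
      have : Real.exp (-t) ≤ Real.exp (-δ) := Real.exp_le_exp.mpr (by linarith)
      linarith
    linarith

theorem key_log_estimate (ε c x : ℝ) (hε : ε ∈ Set.Ioo (0 : ℝ) 1) (hc : 0 < c) :
    0 ≤ max x 0 - c * Phi (x / c) ∧
      max x 0 - c * Phi (x / c) ≤
        ε - c * Real.log (1 - Real.exp (-ε / c)) + c * max (Real.log |x|) 0 - c * Real.log c := by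
  obtain ⟨hε0, hε1⟩ := hε
  have hδ : 0 < ε / c := div_pos hε0 hc
  have hA : 0 < 1 - Real.exp (-(ε / c)) := aux_pos _ hδ
  have hkey : Real.log (1 - Real.exp (-(ε / c))) ≤ Real.log ε - Real.log c := by
    have h1 : Real.log (1 - Real.exp (-(ε / c))) ≤ Real.log (ε / c) :=
      Real.log_le_log hA (aux_le _)
    rwa [Real.log_div (ne_of_gt hε0) (ne_of_gt hc)] at h1
  have hεneg : Real.log ε < 0 := Real.log_neg hε0 hε1
  have hneg : -ε / c = -(ε / c) := by ring
  have hce : c * (ε / c) = ε := by field_simp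
  rcases lt_trichotomy x 0 with hx | hx | hx
  · -- x < 0
    have hy : x / c ≠ 0 := by
      exact div_ne_zero (ne_of_lt hx) (ne_of_gt hc)
    set t : ℝ := -x / c with htdef
    have ht : 0 < t := div_pos (by linarith) hc
    have hyx : x / c = -t := by rw [htdef]; ring
    have hexp : Real.exp (x / c) - 1 < 0 := by
      have : Real.exp (x / c) < 1 := by
        rw [Real.exp_lt_one_iff]
        exact div_neg_of_neg_of_pos hx hc
      linarith
    have hPhi : Phi (x / c) = Real.log (1 - Real.exp (-t)) - Real.log t := by
      rw [Phi, if_neg hy, Real.log_div (ne_of_lt hexp) hy]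
      rw [hyx]
      rw [show Real.exp (-t) - 1 = -(1 - Real.exp (-t)) by ring, Real.log_neg_eq_log,
        show (-t : ℝ) = -t from rfl, Real.log_neg_eq_log]
    have hmax : max x 0 = 0 := max_eq_right (le_of_lt hx)
    have habs : |x| = -x := abs_of_neg hx
    have hlogt : Real.log t ≤ max (Real.log |x|) 0 - Real.log c := by
      rw [htdef, Real.log_div (by linarith : -x ≠ 0) (ne_of_gt hc), habs]
      have : Real.log (-x) ≤ max (Real.log (-x)) 0 := le_max_left _ _
      linarith
    have hG := Gbound ε c t (Real.log |x|) hε0 hε1 hc ht (by rwa [habs] at hlogt ⊢)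
    have hGn := g_nonneg t ht
    constructor
    · rw [hmax, hPhi]
      nlinarith
    · rw [hmax, hPhi, hneg]
      linarith [mul_le_mul_of_nonneg_left hG (le_of_lt hc), hce]
  · -- x = 0
    subst hx
    simp only [zero_div, Phi, if_pos rfl, mul_zero, sub_zero, max_self, abs_zero,
      Real.log_zero, max_self, if_true]
    constructor
    · exact le_refl 0
    · rw [hneg]
      nlinarith [mul_le_mul_of_nonneg_left hkey (le_of_lt hc)]
  · -- x > 0
    have hy0 : 0 < x / c := div_pos hx hc
    have hy : x / c ≠ 0 := ne_of_gt hy0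
    set t : ℝ := x / c with htdef
    have hexp1 : 0 < 1 - Real.exp (-t) := aux_pos t hy0
    have hexp : Real.exp t - 1 = Real.exp t * (1 - Real.exp (-t)) := by
      rw [mul_sub, mul_one, ← Real.exp_add, add_neg_cancel, Real.exp_zero]
    have hPhi : Phi t = t + Real.log (1 - Real.exp (-t)) - Real.log t := by
      rw [Phi, if_neg hy, Real.log_div (by nlinarith [Real.exp_pos t] : Real.exp t - 1 ≠ 0) hy,
        hexp, Real.log_mul (Real.exp_ne_zero t) (ne_of_gt hexp1), Real.log_exp]
    have hct : c * t = x := by rw [htdef]; field_simp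
    have hmax : max x 0 = x := max_eq_left (le_of_lt hx)
    have habs : |x| = x := abs_of_pos hx
    have hlogt : Real.log t ≤ max (Real.log |x|) 0 - Real.log c := by
      rw [htdef, Real.log_div (ne_of_gt hx) (ne_of_gt hc), habs]
      have : Real.log x ≤ max (Real.log x) 0 := le_max_left _ _
      linarith
    have hG := Gbound ε c t (Real.log |x|) hε0 hε1 hc hy0 hlogt
    have hGn := g_nonneg t hy0
    constructor
    · rw [hmax, hPhi]
      nlinarith
    · rw [hmax, hPhi, hneg]
      linarith [mul_le_mul_of_nonneg_left hG (le_of_lt hc), hce, hct]
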